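/- Let A be a unital 𝕜-algebra, σ a 𝕜-algebra automorphism of A, and δ a 𝕜-linear map satisfying δ(xy) = δ(x) y + σ(x) δ(y) for all x, y ∈ A and δ ∘ σ = v² (σ ∘ δ). Then for every integer n ≥ 0 and all a, b ∈ A: δⁿ(ab) = Σ_{i=0}^{n} v^{i(n-i)} C(n,i)_v σ^i(δ^{n-i}(a)) δ^i(b). -/
import Mathlib


noncomputable section

open FreeAlgebra

/-- `𝕜 = F(q)`, the field of rational functions over `F`. -/
abbrev kk (F : Type) [Field F] : Type := RatFunc F

/-- The variable `q`. -/
def qq (F : Type) [Field F] : kk F := RatFunc.X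

/-- `v = q²`. -/
def vv (F : Type) [Field F] : kk F := qq F ^ 2

/-- The balanced quantum integer `[n]_v`. -/
def qint (F : Type) [Field F] (n : ℤ) : kk F :=
  (vv F ^ n - vv F ^ (-n)) / (vv F - (vv F)⁻¹)

/-- The quantum factorial `[m]_v!`. -/
def qfact (F : Type) [Field F] (m : ℕ) : kk F :=
  ∏ j ∈ Finset.Icc 1 m, qint F j

/-- The balanced Gaussian binomial coefficient `C(n,i)_v`. -/
def qbinom (F : Type) [Field F] (n i : ℕ) : kk F :=
  qfact F n / (qfact F i * qfact F (n - i))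

/-- The Cartan matrix of `sl(N+1)`, with 1-based indices. -/
def cartan (i j : ℕ) : ℤ :=
  if i = j then 2 else if i + 1 = j ∨ j + 1 = i then -1 else 0

/-- Generators of `U_q(sl(N+1))`: `e i`, `f i`, `k i`, `kinv i` (0-based `i : Fin N`,
corresponding to the 1-based index `i+1`). -/
inductive Gen (N : ℕ) : Type
  | e : Fin N → Gen N
  | f : Fin N → Gen N
  | k : Fin N → Gen N
  | kinv : Fin N → Gen N

/-- The defining relations of `U_q(sl(N+1))`. -/
inductive UqRel (F : Type) [Field F] (N : ℕ) :
    FreeAlgebra (kk F) (Gen N) → FreeAlgebra (kk F) (Gen N) → Prop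
  | kkinv (i : Fin N) : UqRel F N (ι (kk F) (Gen.k i) * ι (kk F) (Gen.kinv i)) 1
  | kinvk (i : Fin N) : UqRel F N (ι (kk F) (Gen.kinv i) * ι (kk F) (Gen.k i)) 1
  | kcomm (i j : Fin N) :
      UqRel F N (ι (kk F) (Gen.k i) * ι (kk F) (Gen.k j))
        (ι (kk F) (Gen.k j) * ι (kk F) (Gen.k i))
  | ke (i j : Fin N) :
      UqRel F N (ι (kk F) (Gen.k i) * ι (kk F) (Gen.e j) * ι (kk F) (Gen.kinv i))
        ((qq F ^ cartan ((i : ℕ) + 1) ((j : ℕ) + 1)) • ι (kk F) (Gen.e j))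
  | kf (i j : Fin N) :
      UqRel F N (ι (kk F) (Gen.k i) * ι (kk F) (Gen.f j) * ι (kk F) (Gen.kinv i))
        ((qq F ^ (-cartan ((i : ℕ) + 1) ((j : ℕ) + 1))) • ι (kk F) (Gen.f j))
  | ef (i j : Fin N) :
      UqRel F N (ι (kk F) (Gen.e i) * ι (kk F) (Gen.f j) - ι (kk F) (Gen.f j) * ι (kk F) (Gen.e i))
        (if i = j then
          ((qq F ^ 2 - qq F ^ (-2 : ℤ))⁻¹) •
            ((ι (kk F) (Gen.k i)) ^ 2 - (ι (kk F) (Gen.kinv i)) ^ 2)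
        else 0)
  | serre_e_near (i j : Fin N) (h : (i : ℕ) + 1 = j ∨ (j : ℕ) + 1 = i) :
      UqRel F N
        ((ι (kk F) (Gen.e i)) ^ 2 * ι (kk F) (Gen.e j)
          - (qq F ^ 2 + qq F ^ (-2 : ℤ)) •
              (ι (kk F) (Gen.e i) * ι (kk F) (Gen.e j) * ι (kk F) (Gen.e i))
          + ι (kk F) (Gen.e j) * (ι (kk F) (Gen.e i)) ^ 2) 0
  | serre_f_near (i j : Fin N) (h : (i : ℕ) + 1 = j ∨ (j : ℕ) + 1 = i) :
      UqRel F N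
        ((ι (kk F) (Gen.f i)) ^ 2 * ι (kk F) (Gen.f j)
          - (qq F ^ 2 + qq F ^ (-2 : ℤ)) •
              (ι (kk F) (Gen.f i) * ι (kk F) (Gen.f j) * ι (kk F) (Gen.f i))
          + ι (kk F) (Gen.f j) * (ι (kk F) (Gen.f i)) ^ 2) 0
  | serre_e_far (i j : Fin N) (h : (i : ℕ) + 1 < j ∨ (j : ℕ) + 1 < i) :
      UqRel F N (ι (kk F) (Gen.e i) * ι (kk F) (Gen.e j))
        (ι (kk F) (Gen.e j) * ι (kk F) (Gen.e i))
  | serre_f_far (i j : Fin N) (h : (i : ℕ) + 1 < j ∨ (j : ℕ) + 1 < i) :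
      UqRel F N (ι (kk F) (Gen.f i) * ι (kk F) (Gen.f j))
        (ι (kk F) (Gen.f j) * ι (kk F) (Gen.f i))

/-- The quantized enveloping algebra `U = U_q(sl(N+1))`. -/
abbrev Uq (F : Type) [Field F] (N : ℕ) : Type := RingQuot (UqRel F N)

variable (F : Type) [Field F] (N : ℕ)

/-- The image of a generator in `U`. -/
def gen (g : Gen N) : Uq F N := RingQuot.mkAlgHom (kk F) (UqRel F N) (ι (kk F) g)

/-- `e_i` (1-based index `1 ≤ i ≤ N`; junk value `0` outside this range). -/
def egen (i : ℕ) : Uq F N :=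
  if h : 1 ≤ i ∧ i ≤ N then gen F N (Gen.e ⟨i - 1, by omega⟩) else 0

/-- `f_i` (1-based index). -/
def fgen (i : ℕ) : Uq F N :=
  if h : 1 ≤ i ∧ i ≤ N then gen F N (Gen.f ⟨i - 1, by omega⟩) else 0

/-- `k_i` (1-based index). -/
def kgen (i : ℕ) : Uq F N :=
  if h : 1 ≤ i ∧ i ≤ N then gen F N (Gen.k ⟨i - 1, by omega⟩) else 0

/-- `k_i⁻¹` (1-based index). -/
def kinvgen (i : ℕ) : Uq F N :=
  if h : 1 ≤ i ∧ i ≤ N then gen F N (Gen.kinv ⟨i - 1, by omega⟩) else 0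

/-- Auxiliary recursion: `fword i d = f_{i, i+1+d}`. -/
def fword (i : ℕ) : ℕ → Uq F N
  | 0 => fgen F N i
  | d + 1 =>
      qq F • (fword i d * fgen F N (i + 1 + d)) -
        (qq F)⁻¹ • (fgen F N (i + 1 + d) * fword i d)

/-- The quantum root vector `f_{i,j}` (for `1 ≤ i < j ≤ N+1`). -/
def fij (i j : ℕ) : Uq F N := fword F N i (j - i - 1)

/-- Product of `f_{a,b}` over successive entries of a list. -/
def fList : List ℕ → Uq F N
  | a :: b :: rest => fij F N a b * fList (b :: rest)
  | _ => 1

/-- `f_S` for a finite set `S` of indices. -/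
def fSet (S : Finset ℕ) : Uq F N := fList F N (S.sort (· ≤ ·))

/-- The index set `𝕀` of subsets of `{1,…,N+1}` containing `1` and `N+1`. -/
def II : Finset (Finset ℕ) :=
  (Finset.Icc 1 (N + 1)).powerset.filter fun I => 1 ∈ I ∧ N + 1 ∈ I

/-- `r(I) = {s - 1 : s ∈ {1,…,N+1} \ I}`. -/
def rSet (I : Finset ℕ) : Finset ℕ := (Finset.Icc 1 (N + 1) \ I).image (· - 1)

/-- `k_{σ_i} = k_1 ⋯ k_i`. -/
def kσ (i : ℕ) : Uq F N := ((List.range i).map fun j => kgen F N (j + 1)).prod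

/-- `K_{σ_i} = k_{σ_i}²`. -/
def Kσ (i : ℕ) : Uq F N := kσ F N i ^ 2

/-- `k_{σ_i}⁻¹ = k_1⁻¹ ⋯ k_i⁻¹`. -/
def kσinv (i : ℕ) : Uq F N := ((List.range i).map fun j => kinvgen F N (j + 1)).prod

/-- `K_{σ_i}⁻¹`. -/
def KσInv (i : ℕ) : Uq F N := kσinv F N i ^ 2

/-- The element `h_i = -q⁻¹ v^{-(i-1)} K_{σ_i}⁻¹ (K_{σ_i} v^i - K_{σ_i}⁻¹ v^{-i})/(v - v⁻¹) ∈ U`. -/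
def hElt (i : ℕ) : Uq F N :=
  (-(qq F)⁻¹ * vv F ^ (1 - (i : ℤ)) * (vv F - (vv F)⁻¹)⁻¹) •
    (KσInv F N i * (vv F ^ (i : ℤ) • Kσ F N i - vv F ^ (-(i : ℤ)) • KσInv F N i))

/-- `H_I = ∏_{i ∈ r(I)} h_i` (product taken in increasing order of indices). -/
def HI (I : Finset ℕ) : Uq F N := (((rSet N I).sort (· ≤ ·)).map (hElt F N)).prod

/-- A weight `λ` is recorded by its values `(λ, α_j)` for `1 ≤ j ≤ N`;
`pairσ lam i = (λ, σ_i) = (λ, α_1 + ⋯ + α_i)`. -/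
def pairσ (lam : ℕ → ℤ) (i : ℕ) : ℤ := ∑ j ∈ Finset.Icc 1 i, lam j

/-- The scalar `h_i(λ) = -q⁻¹ v^{-((λ,σ_i)+i-1)} [(λ,σ_i)+i]_v`. -/
def hval (lam : ℕ → ℤ) (i : ℕ) : kk F :=
  -(qq F)⁻¹ * vv F ^ (-(pairσ lam i + (i : ℤ) - 1)) * qint F (pairσ lam i + (i : ℤ))

/-- The scalar `H_I(λ) = ∏_{i ∈ r(I)} h_i(λ)`. -/
def HIval (lam : ℕ → ℤ) (I : Finset ℕ) : kk F := ∏ i ∈ rSet N I, hval F lam i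

/-- The left ideal `J_λ` of `U` generated by `e_1, …, e_N` and the `k_j - q^{(λ,α_j)}`. -/
def vermaIdeal (lam : ℕ → ℤ) : Submodule (Uq F N) (Uq F N) :=
  Submodule.span (Uq F N)
    ({x | ∃ j, 1 ≤ j ∧ j ≤ N ∧ x = egen F N j} ∪
      {x | ∃ j, 1 ≤ j ∧ j ≤ N ∧
        x = kgen F N j - algebraMap (kk F) (Uq F N) (qq F ^ lam j)})

/-- The Verma module `M(λ) = U/J_λ`. -/
abbrev Verma (lam : ℕ → ℤ) : Type := Uq F N ⧸ vermaIdeal F N lam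

/-- The highest weight vector `v_λ`, the image of `1` in `M(λ)`. -/
def hw (lam : ℕ → ℤ) : Verma F N lam := Submodule.Quotient.mk 1

/-- The candidate Shapovalov element `Θ_η = Σ_{I ∈ 𝕀} f_I H_I`. -/
def Theta : Uq F N := ∑ I ∈ II N, fSet F N I * HI F N I

/-- `D^n(λ)`: the `(n-1) × (n-1)` matrix over `U` with `(i,j)` entry (1-based)
`f_{i,j+1}` if `i ≤ j`, `-h_j(λ)·1` if `i = j+1`, and `0` otherwise. -/
def Dmat (lam : ℕ → ℤ) (n : ℕ) : Matrix (Fin (n - 1)) (Fin (n - 1)) (Uq F N) :=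
  Matrix.of fun i j =>
    if (i : ℕ) ≤ (j : ℕ) then fij F N ((i : ℕ) + 1) ((j : ℕ) + 2)
    else if (i : ℕ) = (j : ℕ) + 1 then
      -(algebraMap (kk F) (Uq F N) (hval F lam ((j : ℕ) + 1)))
    else 0

/-- The left-to-right determinant of a matrix with noncommutative entries. -/
def ldet {m : ℕ} (B : Matrix (Fin m) (Fin m) (Uq F N)) : Uq F N :=
  ∑ w : Equiv.Perm (Fin m),
    ((Equiv.Perm.sign w : ℤˣ) : ℤ) • ((List.finRange m).map fun j => B (w j) j).prod

end

section AuxLemmas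

variable (F : Type) [Field F]

lemma qq_ne_zero : qq F ≠ 0 := RatFunc.X_ne_zero

lemma vv_ne_zero : vv F ≠ 0 := pow_ne_zero _ (qq_ne_zero F)

lemma qq_pow_ne_one (k : ℕ) (hk : k ≠ 0) : qq F ^ k ≠ 1 := by
  intro h
  have : (algebraMap (Polynomial F) (RatFunc F)) (Polynomial.X ^ k)
      = algebraMap (Polynomial F) (RatFunc F) 1 := by
    simpa [map_pow, RatFunc.algebraMap_X, qq] using h
  have hx := RatFunc.algebraMap_injective F this
  have : (Polynomial.X ^ k : Polynomial F).natDegree = (1 : Polynomial F).natDegree := by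
    rw [hx]
  simp [Polynomial.natDegree_X_pow] at this
  exact hk this

lemma vv_pow_sub_ne (m : ℕ) (hm : m ≠ 0) : vv F ^ m - (vv F ^ m)⁻¹ ≠ 0 := by
  intro h
  have hv : vv F ^ m ≠ 0 := pow_ne_zero _ (vv_ne_zero F)
  have heq := sub_eq_zero.mp h
  have h1 : vv F ^ m * vv F ^ m = 1 := by
    nth_rewrite 2 [heq]
    exact mul_inv_cancel₀ hv
  have : qq F ^ (4 * m) = 1 := by
    have : (qq F ^ 2) ^ m * (qq F ^ 2) ^ m = 1 := h1
    calc qq F ^ (4 * m) = (qq F ^ 2) ^ m * (qq F ^ 2) ^ m := by ring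
    _ = 1 := this
  exact qq_pow_ne_one F (4 * m) (by omega) this

lemma vden_ne : vv F - (vv F)⁻¹ ≠ 0 := by
  have := vv_pow_sub_ne F 1 one_ne_zero
  simpa using this

lemma qint_natCast (m : ℕ) : qint F m = (vv F ^ m - (vv F ^ m)⁻¹) / (vv F - (vv F)⁻¹) := by
  simp [qint, zpow_neg, zpow_natCast]

lemma qint_ne_zero (m : ℕ) (hm : m ≠ 0) : qint F m ≠ 0 := by
  rw [qint_natCast]
  exact div_ne_zero (vv_pow_sub_ne F m hm) (vden_ne F)

lemma qfact_ne_zero (m : ℕ) : qfact F m ≠ 0 := by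
  apply Finset.prod_ne_zero_iff.mpr
  intro j hj
  simp only [Finset.mem_Icc] at hj
  exact_mod_cast qint_ne_zero F j (by omega)

lemma qfact_succ (m : ℕ) : qfact F (m + 1) = qfact F m * qint F (m + 1) := by
  rw [qfact, Finset.prod_Icc_succ_top (by omega : 1 ≤ m + 1)]
  rfl

lemma qfact_zero : qfact F 0 = 1 := by simp [qfact]

lemma qbinom_zero (n : ℕ) : qbinom F n 0 = 1 := by
  simp [qbinom, qfact_zero, div_self (qfact_ne_zero F n)]

lemma qbinom_self (n : ℕ) : qbinom F n n = 1 := by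
  simp [qbinom, qfact_zero, div_self (mul_ne_zero (qfact_ne_zero F n) one_ne_zero),
    div_self (qfact_ne_zero F n)]

lemma qint_add (a b : ℕ) : qint F (a + b) =
    vv F ^ a * qint F b + (vv F ^ b)⁻¹ * qint F a := by
  have hab : ((a + b : ℕ) : ℤ) = (a : ℤ) + b := by push_cast; ring
  rw [show ((a : ℤ) + b) = ((a + b : ℕ) : ℤ) by push_cast; ring]
  have hv := vv_ne_zero F
  have key : vv F ^ (a + b) - (vv F ^ (a + b))⁻¹ =
      vv F ^ a * (vv F ^ b - (vv F ^ b)⁻¹) + (vv F ^ b)⁻¹ * (vv F ^ a - (vv F ^ a)⁻¹) := by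
    rw [pow_add]
    field_simp
    ring
  rw [qint_natCast, qint_natCast, qint_natCast, key, add_div, mul_div_assoc, mul_div_assoc]

variable (F : Type) [Field F]

lemma qbinom_succ (n i : ℕ) (h1 : 1 ≤ i) (h2 : i ≤ n) :
    qbinom F (n + 1) i =
      vv F ^ i * qbinom F n i + (vv F ^ (n + 1 - i))⁻¹ * qbinom F n (i - 1) := by
  obtain ⟨s, rfl⟩ : ∃ s, i = s + 1 := ⟨i - 1, by omega⟩
  obtain ⟨m, rfl⟩ : ∃ m, n = s + 1 + m := ⟨n - (s + 1), by omega⟩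
  have hs1 : s + 1 + m + 1 - (s + 1) = m + 1 := by omega
  have hs2 : s + 1 + m - (s + 1) = m := by omega
  have hs3 : s + 1 + m - s = m + 1 := by omega
  have hs4 : s + 1 - 1 = s := by omega
  rw [qbinom, qbinom, qbinom, hs4, hs1, hs2, hs3]
  rw [show s + 1 + m + 1 = (s + 1 + m) + 1 by omega, qfact_succ, qfact_succ F s, qfact_succ F m]
  have hN := qint_add F (s + 1) (m + 1)
  push_cast at hN
  rw [show ((s : ℤ) + 1 + ((m : ℤ) + 1)) = ((s : ℤ) + 1 + (m : ℤ) + 1) by ring] at hN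
  push_cast
  have h1 := qfact_ne_zero F (s + 1 + m)
  have h2 := qfact_ne_zero F s
  have h3 := qfact_ne_zero F m
  have h4 : qint F ((s + 1 : ℕ) : ℤ) ≠ 0 := qint_ne_zero F (s + 1) (by omega)
  have h5 : qint F ((m + 1 : ℕ) : ℤ) ≠ 0 := qint_ne_zero F (m + 1) (by omega)
  have h6 : vv F ≠ 0 := vv_ne_zero F
  push_cast at h4 h5
  have hN2 : qint F ((s : ℤ) + 1 + (m : ℤ) + 1) * vv F ^ (m + 1) =
      vv F ^ (s + 1) * qint F ((m : ℤ) + 1) * vv F ^ (m + 1) + qint F ((s : ℤ) + 1) := by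
    rw [hN]
    field_simp
  have hp : vv F ^ (m + 1) ≠ 0 := pow_ne_zero _ h6
  rw [inv_mul_eq_div, div_div, mul_div_assoc']
  rw [div_add_div _ _ (mul_ne_zero (mul_ne_zero h2 h4) h3)
      (mul_ne_zero (mul_ne_zero h2 (mul_ne_zero h3 h5)) hp),
    div_eq_div_iff (mul_ne_zero (mul_ne_zero h2 h4) (mul_ne_zero h3 h5))
      (mul_ne_zero (mul_ne_zero (mul_ne_zero h2 h4) h3)
        (mul_ne_zero (mul_ne_zero h2 (mul_ne_zero h3 h5)) hp))]
  linear_combination (qfact F (s + 1 + m) * (qfact F s * qint F ((s : ℤ) + 1) * qfact F m) *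
    (qfact F s * qfact F m * qint F ((m : ℤ) + 1))) * hN2

lemma coef_rec (n i : ℕ) (h1 : 1 ≤ i) (h2 : i ≤ n) :
    vv F ^ (i * (n + 1 - i)) * qbinom F (n + 1) i =
      vv F ^ (2 * i) * (vv F ^ (i * (n - i)) * qbinom F n i) +
        vv F ^ ((i - 1) * (n + 1 - i)) * qbinom F n (i - 1) := by
  rw [qbinom_succ F n i h1 h2]
  obtain ⟨s, rfl⟩ : ∃ s, i = s + 1 := ⟨i - 1, by omega⟩
  obtain ⟨m, rfl⟩ : ∃ m, n = s + 1 + m := ⟨n - (s + 1), by omega⟩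
  have hs1 : s + 1 + m + 1 - (s + 1) = m + 1 := by omega
  have hs2 : s + 1 + m - (s + 1) = m := by omega
  have hs4 : s + 1 - 1 = s := by omega
  rw [hs1, hs2, hs4]
  have h6 : vv F ≠ 0 := vv_ne_zero F
  field_simp
  ring


end AuxLemmas

/-- let `A` be a unital `𝕜`-algebra, `σ` a `𝕜`-algebra automorphism
of `A`, `δ` a `𝕜`-linear map with `δ(xy) = δ(x)y + σ(x)δ(y)` and `δ∘σ = v²(σ∘δ)`.
Then for every `n ≥ 0` and `a, b ∈ A`:
`δⁿ(ab) = Σ_{i=0}^n v^{i(n-i)} C(n,i)_v σ^i(δ^{n-i}(a)) δ^i(b)`. -/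
theorem stmt13 (F : Type) [Field F] (A : Type) [Ring A] [Algebra (kk F) A]
    (σ : A ≃ₐ[kk F] A) (δ : A →ₗ[kk F] A)
    (hd : ∀ x y : A, δ (x * y) = δ x * y + σ x * δ y)
    (hc : ∀ x : A, δ (σ x) = vv F ^ 2 • σ (δ x))
    (n : ℕ) (a b : A) :
    (⇑δ)^[n] (a * b) =
      ∑ i ∈ Finset.range (n + 1),
        (vv F ^ (i * (n - i)) * qbinom F n i) •
          ((⇑σ)^[i] ((⇑δ)^[n - i] a) * (⇑δ)^[i] b) := by
  induction n with
  | zero => simp [qbinom_zero]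
  | succ n ih =>
    have hds : ∀ (i : ℕ) (x : A), δ ((⇑σ)^[i] x) = vv F ^ (2 * i) • (⇑σ)^[i] (δ x) := by
      intro i
      induction i with
      | zero => intro x; simp
      | succ i ihh =>
        intro x
        rw [Function.iterate_succ_apply', hc, ihh, map_smul, smul_smul,
          Function.iterate_succ_apply', show 2 * (i + 1) = 2 + 2 * i by ring, pow_add]
    rw [Function.iterate_succ_apply', ih, map_sum]
    simp only [map_smul]
    have hterm : ∀ i ∈ Finset.range (n + 1),
        (vv F ^ (i * (n - i)) * qbinom F n i) • δ ((⇑σ)^[i] ((⇑δ)^[n - i] a) * (⇑δ)^[i] b) =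
          (vv F ^ (2 * i) * (vv F ^ (i * (n - i)) * qbinom F n i)) •
              ((⇑σ)^[i] ((⇑δ)^[n + 1 - i] a) * (⇑δ)^[i] b) +
            (vv F ^ (i * (n - i)) * qbinom F n i) •
              ((⇑σ)^[i + 1] ((⇑δ)^[n - i] a) * (⇑δ)^[i + 1] b) := by
      intro i hi
      simp only [Finset.mem_range] at hi
      rw [hd, hds i,
        show δ ((⇑δ)^[n - i] a) = (⇑δ)^[n + 1 - i] a by
          rw [show n + 1 - i = (n - i) + 1 by omega, Function.iterate_succ_apply'],
        show σ ((⇑σ)^[i] ((⇑δ)^[n - i] a)) = (⇑σ)^[i + 1] ((⇑δ)^[n - i] a) from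
          (Function.iterate_succ_apply' (⇑σ) i _).symm,
        show δ ((⇑δ)^[i] b) = (⇑δ)^[i + 1] b from
          (Function.iterate_succ_apply' (⇑δ) i b).symm,
        smul_add, smul_mul_assoc, smul_smul,
        mul_comm (vv F ^ (i * (n - i)) * qbinom F n i) (vv F ^ (2 * i))]
    rw [Finset.sum_congr rfl hterm, Finset.sum_add_distrib]
    -- abbreviations
    rw [Finset.sum_range_succ'
        (fun i => (vv F ^ (2 * i) * (vv F ^ (i * (n - i)) * qbinom F n i)) •
          ((⇑σ)^[i] ((⇑δ)^[n + 1 - i] a) * (⇑δ)^[i] b)) n,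
      Finset.sum_range_succ
        (fun i => (vv F ^ (i * (n - i)) * qbinom F n i) •
          ((⇑σ)^[i + 1] ((⇑δ)^[n - i] a) * (⇑δ)^[i + 1] b)) n,
      Finset.sum_range_succ'
        (fun i => (vv F ^ (i * (n + 1 - i)) * qbinom F (n + 1) i) •
          ((⇑σ)^[i] ((⇑δ)^[n + 1 - i] a) * (⇑δ)^[i] b)) (n + 1),
      Finset.sum_range_succ
        (fun i => (vv F ^ ((i + 1) * (n + 1 - (i + 1))) * qbinom F (n + 1) (i + 1)) •
          ((⇑σ)^[i + 1] ((⇑δ)^[n + 1 - (i + 1)] a) * (⇑δ)^[i + 1] b)) n]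
    have hmid : ∀ i ∈ Finset.range n,
        (vv F ^ ((i + 1) * (n + 1 - (i + 1))) * qbinom F (n + 1) (i + 1)) •
            ((⇑σ)^[i + 1] ((⇑δ)^[n + 1 - (i + 1)] a) * (⇑δ)^[i + 1] b) =
          (vv F ^ (2 * (i + 1)) * (vv F ^ ((i + 1) * (n - (i + 1))) * qbinom F n (i + 1))) •
              ((⇑σ)^[i + 1] ((⇑δ)^[n + 1 - (i + 1)] a) * (⇑δ)^[i + 1] b) +
            (vv F ^ (i * (n - i)) * qbinom F n i) •
              ((⇑σ)^[i + 1] ((⇑δ)^[n - i] a) * (⇑δ)^[i + 1] b) := by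
      intro i hi
      simp only [Finset.mem_range] at hi
      have hrec := coef_rec F n (i + 1) (by omega) (by omega)
      rw [show (i + 1) - 1 = i from rfl] at hrec
      rw [show n + 1 - (i + 1) = n - i from by omega] at hrec ⊢
      rw [hrec, add_smul]
    rw [Finset.sum_congr rfl hmid, Finset.sum_add_distrib]
    have h0 : (vv F ^ (0 * (n + 1 - 0)) * qbinom F (n + 1) 0) •
          ((⇑σ)^[0] ((⇑δ)^[n + 1 - 0] a) * (⇑δ)^[0] b) =
        (vv F ^ (2 * 0) * (vv F ^ (0 * (n - 0)) * qbinom F n 0)) •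
          ((⇑σ)^[0] ((⇑δ)^[n + 1 - 0] a) * (⇑δ)^[0] b) := by
      simp [qbinom_zero]
    have hlast : (vv F ^ ((n + 1) * (n + 1 - (n + 1))) * qbinom F (n + 1) (n + 1)) •
          ((⇑σ)^[n + 1] ((⇑δ)^[n + 1 - (n + 1)] a) * (⇑δ)^[n + 1] b) =
        (vv F ^ (n * (n - n)) * qbinom F n n) •
          ((⇑σ)^[n + 1] ((⇑δ)^[n - n] a) * (⇑δ)^[n + 1] b) := by
      simp [qbinom_self]
    rw [h0, hlast]
    abel
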